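/- Let N and i be natural numbers with N ≥ i ≥ 1, let R_k > 0 be a real number, and let L_0, L_1, ..., L_i be real numbers with L_0 = 0 and 0 ≤ L_1 ≤ ... ≤ L_i. Define f_i = (Σ_{n=1}^{i} L_n)/R_k and f̂_i = Σ_{n=1}^{i} ((N − n + 1)/R_k)·(L_n − L_{n−1}). Then f_i ≤ f̂_i. -/

import Mathlib

/-!
Write `Δₙ = L n - L (n - 1)`. Since `L 0 = 0`, summation by parts gives
`∑_{n ≤ i} L n = ∑_{n ≤ i} (i - n + 1) Δₙ`. The jobs being sorted, every `Δₙ` is nonnegative,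
so raising each weight `i - n + 1` to `N - n + 1` can only increase the sum.
-/

open Finset

section SummationByParts

variable {R : Type*} [CommRing R] (L : ℕ → R)

theorem sum_Icc_one_sub_pred (i : ℕ) :
    ∑ n ∈ Icc 1 i, (L n - L (n - 1)) = L i - L 0 := by
  induction i with
  | zero => simp
  | succ i ih =>
    rw [sum_Icc_succ_top (by omega), ih, Nat.add_sub_cancel]
    ring

theorem sum_Icc_one_mul_sub_pred (hL0 : L 0 = 0) (i : ℕ) :
    ∑ n ∈ Icc 1 i, ((i : R) - n + 1) * (L n - L (n - 1)) = ∑ n ∈ Icc 1 i, L n := by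
  induction i with
  | zero => simp
  | succ i ih =>
    have hweights : ∑ n ∈ Icc 1 (i + 1), (((i + 1 : ℕ) : R) - n + 1) * (L n - L (n - 1))
        = ∑ n ∈ Icc 1 (i + 1), ((i : R) - n + 1) * (L n - L (n - 1))
          + ∑ n ∈ Icc 1 (i + 1), (L n - L (n - 1)) := by
      rw [← sum_add_distrib]
      refine sum_congr rfl fun n _ => ?_
      push_cast
      ring
    rw [hweights, sum_Icc_one_sub_pred, hL0, sum_Icc_succ_top (by omega), ih,
      sum_Icc_succ_top (by omega), Nat.add_sub_cancel]
    push_cast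
    ring

end SummationByParts

theorem stmt_3_general (N i : ℕ) (hNi : i ≤ N) (Rk : ℝ) (hRk : 0 < Rk)
    (L : ℕ → ℝ) (hL0 : L 0 = 0)
    (hmono : ∀ n, 1 ≤ n → n ≤ i → L (n - 1) ≤ L n) :
    (∑ n ∈ Finset.Icc 1 i, L n) / Rk ≤
      ∑ n ∈ Finset.Icc 1 i, (((N : ℝ) - (n : ℝ) + 1) / Rk) * (L n - L (n - 1)) := by
  have hweights : ∑ n ∈ Icc 1 i, ((i : ℝ) - n + 1) * (L n - L (n - 1))
      ≤ ∑ n ∈ Icc 1 i, ((N : ℝ) - n + 1) * (L n - L (n - 1)) := by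
    refine sum_le_sum fun n hn => ?_
    obtain ⟨h1n, hni⟩ := mem_Icc.mp hn
    have hiN : (i : ℝ) ≤ N := by exact_mod_cast hNi
    gcongr
    exact sub_nonneg.mpr (hmono n h1n hni)
  calc (∑ n ∈ Icc 1 i, L n) / Rk
      = (∑ n ∈ Icc 1 i, ((i : ℝ) - n + 1) * (L n - L (n - 1))) / Rk := by
        rw [sum_Icc_one_mul_sub_pred L hL0]
    _ ≤ (∑ n ∈ Icc 1 i, ((N : ℝ) - n + 1) * (L n - L (n - 1))) / Rk := by gcongr
    _ = ∑ n ∈ Icc 1 i, (((N : ℝ) - n + 1) / Rk) * (L n - L (n - 1)) := by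
        rw [sum_div]
        exact sum_congr rfl fun n _ => by ring

/-- Theorem 1: the 2-level virtual time finish time `f_i` is no later than the
user-job fair finish time `f̂_i`. -/
theorem stmt_3 (N i : ℕ) (hi : 1 ≤ i) (hNi : i ≤ N) (Rk : ℝ) (hRk : 0 < Rk)
    (L : ℕ → ℝ) (hL0 : L 0 = 0)
    (hmono : ∀ n, 1 ≤ n → n ≤ i → L (n - 1) ≤ L n) :
    (∑ n ∈ Finset.Icc 1 i, L n) / Rk ≤
      ∑ n ∈ Finset.Icc 1 i, (((N : ℝ) - (n : ℝ) + 1) / Rk) * (L n - L (n - 1)) :=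
  stmt_3_general N i hNi Rk hRk L hL0 hmono
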